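/- There exists a constant K > 0 such that the following holds for every integer n ≥ 3. Set d(i) = min(√(n/i), log n) and p_i = i·d(i)/(100n) for 1 ≤ i ≤ n, and let L₁,…,L_n be mutually independent random variables where L_i is geometrically distributed on {1,2,3,…} with success probability p_i. Then Pr[ Σ_{i=1}^n L_i ≥ 2·Σ_{i=1}^n 1/p_i ] ≤ K / (log n)². -/

import Mathlib

/-!
Chebyshev's inequality. The sum `S = ∑ Lᵢ` has mean `m = ∑ 1/pᵢ` and variance at most
`∑ 1/pᵢ²`. Since `i·d(i) ≤ i·√(n/i) ≤ n`, every `pᵢ ≤ 1/100`, so `m ≥ 100 n`. Since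
`1/d(i)² = max(i/n, 1/log² n)`, we get `∑ 1/pᵢ² ≤ (100 n)² ((1 + log n)/n + 2/log² n)`, and
`Pr[S ≥ 2m] ≤ Var S / m² ≤ (1 + log n)/n + 2/log² n = O(1/log² n)`.
-/

open MeasureTheory ProbabilityTheory
open scoped ENNReal

/-- `d(i) = min(√(n/i), log n)`. -/
noncomputable def dFun (n i : ℕ) : ℝ :=
  min (Real.sqrt ((n : ℝ) / (i : ℝ))) (Real.log n)

/-- `p_i = i·d(i)/(100 n)` for `1 ≤ i ≤ n`, indexed here by `i : Fin n`
(so `i` stands for the index `i+1 ∈ {1,…,n}`). -/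
noncomputable def pFun (n : ℕ) (i : Fin n) : ℝ :=
  ((i : ℕ) + 1 : ℝ) * dFun n ((i : ℕ) + 1) / (100 * (n : ℝ))

section Geometric

variable {Ω : Type*} [MeasurableSpace Ω]

def HasGeometricLaw (μ : Measure Ω) (X : Ω → ℕ) (p : ℝ) : Prop :=
  ∀ k : ℕ, 1 ≤ k → μ {ω | X ω = k} = ENNReal.ofReal ((1 - p) ^ (k - 1) * p)

variable {μ : Measure Ω} {X : Ω → ℕ} {p : ℝ}

lemma hasSum_succ_mul_geometric (hp0 : 0 < p) (hp1 : p ≤ 1) :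
    HasSum (fun j : ℕ ↦ ((j + 1 : ℕ) : ℝ) * ((1 - p) ^ j * p)) (1 / p) := by
  have hq : ‖1 - p‖ < 1 := by rw [Real.norm_eq_abs, abs_lt]; constructor <;> linarith
  have h := (hasSum_choose_mul_geometric_of_norm_lt_one 1 hq).mul_right p
  rw [sub_sub_cancel, show 1 / p ^ (1 + 1) * p = 1 / p by field_simp] at h
  exact h.congr_fun fun j ↦ by rw [Nat.choose_one_right, mul_assoc]

lemma hasSum_succ_sq_mul_geometric (hp0 : 0 < p) (hp1 : p ≤ 1) :
    HasSum (fun j : ℕ ↦ ((j + 1 : ℕ) : ℝ) ^ 2 * ((1 - p) ^ j * p)) ((2 - p) / p ^ 2) := by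
  have hq : ‖1 - p‖ < 1 := by rw [Real.norm_eq_abs, abs_lt]; constructor <;> linarith
  have h := ((hasSum_choose_mul_geometric_of_norm_lt_one 2 hq).mul_right (2 * p)).sub
    (hasSum_succ_mul_geometric hp0 hp1)
  rw [sub_sub_cancel, show 1 / p ^ (2 + 1) * (2 * p) - 1 / p = (2 - p) / p ^ 2 by
    field_simp; ring] at h
  refine h.congr_fun fun j ↦ ?_
  rw [Nat.cast_choose_two]
  push_cast
  ring

lemma HasGeometricLaw.lintegral_comp (h : HasGeometricLaw μ X p) (hX : Measurable X)
    {g : ℕ → ℝ≥0∞} (hg : g 0 = 0) :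
    ∫⁻ ω, g (X ω) ∂μ = ∑' j : ℕ, g (j + 1) * ENNReal.ofReal ((1 - p) ^ j * p) := by
  rw [← lintegral_map (measurable_from_nat (f := g)) hX, lintegral_countable',
    tsum_eq_zero_add' ENNReal.summable, hg, zero_mul, zero_add]
  refine tsum_congr fun j ↦ ?_
  rw [Measure.map_apply hX (measurableSet_singleton _)]
  exact congrArg (g (j + 1) * ·) (h (j + 1) j.succ_pos)

lemma geometric_weight_nonneg (hp0 : 0 ≤ p) (hp1 : p ≤ 1) (j : ℕ) : 0 ≤ (1 - p) ^ j * p :=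
  mul_nonneg (pow_nonneg (sub_nonneg.2 hp1) j) hp0

lemma HasGeometricLaw.lintegral_ofReal_comp (h : HasGeometricLaw μ X p) (hX : Measurable X)
    (hp0 : 0 ≤ p) (hp1 : p ≤ 1) {f : ℕ → ℝ} (hf0 : f 0 = 0) (hf : ∀ k, 0 ≤ f k)
    {s : ℝ} (hs : HasSum (fun j : ℕ ↦ f (j + 1) * ((1 - p) ^ j * p)) s) :
    ∫⁻ ω, ENNReal.ofReal (f (X ω)) ∂μ = ENNReal.ofReal s := by
  rw [h.lintegral_comp hX (g := fun k ↦ ENNReal.ofReal (f k)) (by simp [hf0]), ← hs.tsum_eq,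
    ENNReal.ofReal_tsum_of_nonneg
      (fun j ↦ mul_nonneg (hf _) (geometric_weight_nonneg hp0 hp1 j)) hs.summable]
  exact tsum_congr fun j ↦ (ENNReal.ofReal_mul (hf _)).symm

lemma HasGeometricLaw.integrable_comp (h : HasGeometricLaw μ X p) (hX : Measurable X)
    (hp0 : 0 ≤ p) (hp1 : p ≤ 1) {f : ℕ → ℝ} (hf0 : f 0 = 0) (hf : ∀ k, 0 ≤ f k)
    {s : ℝ} (hs : HasSum (fun j : ℕ ↦ f (j + 1) * ((1 - p) ^ j * p)) s) :
    Integrable (fun ω ↦ f (X ω)) μ := by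
  refine ⟨(measurable_from_nat.comp hX).aestronglyMeasurable, ?_⟩
  rw [hasFiniteIntegral_iff_ofReal (ae_of_all _ fun ω ↦ hf _),
    h.lintegral_ofReal_comp hX hp0 hp1 hf0 hf hs]
  exact ENNReal.ofReal_lt_top

lemma HasGeometricLaw.integral_comp (h : HasGeometricLaw μ X p) (hX : Measurable X)
    (hp0 : 0 ≤ p) (hp1 : p ≤ 1) {f : ℕ → ℝ} (hf0 : f 0 = 0) (hf : ∀ k, 0 ≤ f k)
    {s : ℝ} (hs : HasSum (fun j : ℕ ↦ f (j + 1) * ((1 - p) ^ j * p)) s) :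
    ∫ ω, f (X ω) ∂μ = s := by
  rw [integral_eq_lintegral_of_nonneg_ae (ae_of_all _ fun ω ↦ hf _)
    (measurable_from_nat.comp hX).aestronglyMeasurable,
    h.lintegral_ofReal_comp hX hp0 hp1 hf0 hf hs,
    ENNReal.toReal_ofReal
      (hs.nonneg fun j ↦ mul_nonneg (hf _) (geometric_weight_nonneg hp0 hp1 j))]

lemma HasGeometricLaw.memLp_two (h : HasGeometricLaw μ X p) (hX : Measurable X)
    (hp0 : 0 < p) (hp1 : p ≤ 1) : MemLp (fun ω ↦ (X ω : ℝ)) 2 μ :=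
  (memLp_two_iff_integrable_sq (measurable_from_nat.comp hX).aestronglyMeasurable).2 <|
    h.integrable_comp hX hp0.le hp1 (f := fun k ↦ (k : ℝ) ^ 2) (by simp)
      (fun k ↦ by positivity) (hasSum_succ_sq_mul_geometric hp0 hp1)

lemma HasGeometricLaw.integrable_natCast (h : HasGeometricLaw μ X p) (hX : Measurable X)
    (hp0 : 0 < p) (hp1 : p ≤ 1) : Integrable (fun ω ↦ (X ω : ℝ)) μ :=
  h.integrable_comp hX hp0.le hp1 (f := fun k ↦ (k : ℝ)) (by simp) (fun k ↦ by positivity)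
    (hasSum_succ_mul_geometric hp0 hp1)

lemma HasGeometricLaw.integral_natCast (h : HasGeometricLaw μ X p) (hX : Measurable X)
    (hp0 : 0 < p) (hp1 : p ≤ 1) : ∫ ω, (X ω : ℝ) ∂μ = 1 / p :=
  h.integral_comp hX hp0.le hp1 (f := fun k ↦ (k : ℝ)) (by simp) (fun k ↦ by positivity)
    (hasSum_succ_mul_geometric hp0 hp1)

lemma HasGeometricLaw.variance_natCast [IsProbabilityMeasure μ] (h : HasGeometricLaw μ X p)
    (hX : Measurable X) (hp0 : 0 < p) (hp1 : p ≤ 1) :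
    variance (fun ω ↦ (X ω : ℝ)) μ = (1 - p) / p ^ 2 := by
  rw [variance_eq_sub (h.memLp_two hX hp0 hp1), h.integral_natCast hX hp0 hp1,
    show ∫ ω, ((fun ω ↦ (X ω : ℝ)) ^ 2) ω ∂μ = (2 - p) / p ^ 2 from
      h.integral_comp hX hp0.le hp1 (f := fun k ↦ (k : ℝ) ^ 2) (by simp)
        (fun k ↦ by positivity) (hasSum_succ_sq_mul_geometric hp0 hp1)]
  field_simp
  ring

end Geometric

section SumOfGeometric

variable {Ω : Type*} [MeasurableSpace Ω] {μ : Measure Ω} {ι : Type*} [Fintype ι]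
  {L : ι → Ω → ℕ} {p : ι → ℝ}

lemma memLp_sum_of_hasGeometricLaw (hL : ∀ i, Measurable (L i))
    (hlaw : ∀ i, HasGeometricLaw μ (L i) (p i)) (hp0 : ∀ i, 0 < p i) (hp1 : ∀ i, p i ≤ 1) :
    MemLp (fun ω ↦ ∑ i, (L i ω : ℝ)) 2 μ :=
  memLp_finsetSum Finset.univ fun i _ ↦ (hlaw i).memLp_two (hL i) (hp0 i) (hp1 i)

lemma integral_sum_of_hasGeometricLaw (hL : ∀ i, Measurable (L i))
    (hlaw : ∀ i, HasGeometricLaw μ (L i) (p i)) (hp0 : ∀ i, 0 < p i) (hp1 : ∀ i, p i ≤ 1) :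
    ∫ ω, ∑ i, (L i ω : ℝ) ∂μ = ∑ i, 1 / p i := by
  rw [integral_finsetSum _ fun i _ ↦ (hlaw i).integrable_natCast (hL i) (hp0 i) (hp1 i)]
  exact Finset.sum_congr rfl fun i _ ↦ (hlaw i).integral_natCast (hL i) (hp0 i) (hp1 i)

lemma variance_sum_of_hasGeometricLaw [IsProbabilityMeasure μ] (hL : ∀ i, Measurable (L i))
    (hind : iIndepFun L μ) (hlaw : ∀ i, HasGeometricLaw μ (L i) (p i)) (hp0 : ∀ i, 0 < p i)
    (hp1 : ∀ i, p i ≤ 1) :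
    variance (fun ω ↦ ∑ i, (L i ω : ℝ)) μ = ∑ i, (1 - p i) / p i ^ 2 := by
  have hpair : Set.Pairwise (Finset.univ : Finset ι)
      fun i j ↦ IndepFun (fun ω ↦ (L i ω : ℝ)) (fun ω ↦ (L j ω : ℝ)) μ :=
    fun i _ j _ hij ↦ (hind.indepFun hij).comp measurable_from_nat measurable_from_nat
  rw [← Finset.sum_fn, IndepFun.variance_sum
    (fun i _ ↦ (hlaw i).memLp_two (hL i) (hp0 i) (hp1 i)) hpair]
  exact Finset.sum_congr rfl fun i _ ↦ (hlaw i).variance_natCast (hL i) (hp0 i) (hp1 i)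

end SumOfGeometric

lemma toReal_meas_ge_two_mul_integral_le {Ω : Type*} [MeasurableSpace Ω] {μ : Measure Ω}
    [IsFiniteMeasure μ] {Y : Ω → ℝ} (hY : MemLp Y 2 μ) (hm : 0 < μ[Y]) :
    (μ {ω | 2 * μ[Y] ≤ Y ω}).toReal ≤ variance Y μ / μ[Y] ^ 2 := by
  have hsub : {ω | 2 * μ[Y] ≤ Y ω} ⊆ {ω | μ[Y] ≤ |Y ω - μ[Y]|} := fun ω hω ↦ by
    simp only [Set.mem_ofPred_eq] at hω ⊢
    rw [abs_of_nonneg (by linarith)]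
    linarith
  calc (μ {ω | 2 * μ[Y] ≤ Y ω}).toReal
      ≤ (ENNReal.ofReal (variance Y μ / μ[Y] ^ 2)).toReal :=
        ENNReal.toReal_mono ENNReal.ofReal_ne_top
          ((measure_mono hsub).trans (meas_ge_le_variance_div_sq hY hm))
    _ = variance Y μ / μ[Y] ^ 2 :=
        ENNReal.toReal_ofReal (div_nonneg (variance_nonneg _ _) (sq_nonneg _))

lemma one_le_log_of_three_le {n : ℕ} (hn : 3 ≤ n) : 1 ≤ Real.log n := by
  rw [Real.le_log_iff_exp_le (by positivity)]
  calc Real.exp 1 ≤ 3 := by linarith [Real.exp_one_lt_d9]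
    _ ≤ n := by exact_mod_cast hn

lemma log_pow_three_le {x : ℝ} (hx : 0 ≤ x) : Real.log x ^ 3 ≤ 27 * x := by
  rcases le_or_gt 0 (Real.log x) with hlog | hlog
  · have h := Real.log_le_rpow_div hx (by norm_num : (0 : ℝ) < 1 / 3)
    calc Real.log x ^ 3 ≤ (x ^ (1 / 3 : ℝ) / (1 / 3)) ^ 3 := by gcongr
      _ = 27 * (x ^ (1 / 3 : ℝ)) ^ (3 : ℕ) := by ring
      _ = 27 * x := by rw [← Real.rpow_natCast, ← Real.rpow_mul hx]; norm_num
  · have : Real.log x ^ 3 < 0 := Odd.pow_neg (by decide) hlog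
    linarith

lemma one_add_log_div_le {x : ℝ} (hx : 1 ≤ Real.log x) :
    (1 + Real.log x) / x ≤ 54 / Real.log x ^ 2 := by
  rcases le_or_gt x 0 with hx0 | hx0
  · exact (div_nonpos_of_nonneg_of_nonpos (by linarith) hx0).trans (by positivity)
  · rw [div_le_div_iff₀ hx0 (by positivity)]
    -- `(1 + log x) log² x ≤ 2 log³ x ≤ 54 x`
    nlinarith [log_pow_three_le hx0.le]

lemma one_div_dFun_sq_le (n j : ℕ) : 1 / dFun n j ^ 2 ≤ j / n + 1 / Real.log n ^ 2 := by
  have h1 : 0 ≤ (j : ℝ) / n := by positivity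
  have h2 : 0 ≤ 1 / Real.log n ^ 2 := by positivity
  rcases min_choice (Real.sqrt ((n : ℝ) / j)) (Real.log n) with h | h <;>
    rw [dFun, h]
  · rw [Real.sq_sqrt (by positivity), one_div_div]
    linarith
  · linarith

lemma one_div_pFun_sq_le {n : ℕ} (i : Fin n) :
    1 / pFun n i ^ 2 ≤ (100 * n) ^ 2 * (1 / n * (1 / ((i : ℕ) + 1 : ℝ)) +
      1 / Real.log n ^ 2 * (1 / ((i : ℕ) + 1 : ℝ) ^ 2)) := by
  have hn : (0 : ℝ) < n := by exact_mod_cast i.pos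
  have hd := one_div_dFun_sq_le n ((i : ℕ) + 1)
  push_cast at hd
  calc 1 / pFun n i ^ 2
      = (100 * n) ^ 2 / ((i : ℕ) + 1 : ℝ) ^ 2 * (1 / dFun n ((i : ℕ) + 1) ^ 2) := by
        rw [pFun]; field_simp
    _ ≤ (100 * n) ^ 2 / ((i : ℕ) + 1 : ℝ) ^ 2 *
          (((i : ℕ) + 1) / n + 1 / Real.log n ^ 2) := by
        gcongr
    _ = _ := by field_simp

lemma pFun_pos {n : ℕ} (hn : 1 < n) (i : Fin n) : 0 < pFun n i := by
  have hlog : 0 < Real.log n := Real.log_pos (by exact_mod_cast hn)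
  have hd : 0 < dFun n ((i : ℕ) + 1) := lt_min (Real.sqrt_pos.2 (by positivity)) hlog
  rw [pFun]
  positivity

lemma pFun_le_one_div_hundred {n : ℕ} (i : Fin n) : pFun n i ≤ 1 / 100 := by
  have hn : (0 : ℝ) < n := by exact_mod_cast i.pos
  have hj : (0 : ℝ) < (i : ℕ) + 1 := by positivity
  have hjn : ((i : ℕ) + 1 : ℝ) ≤ n := by exact_mod_cast i.isLt
  have hd : dFun n ((i : ℕ) + 1) ≤ n / ((i : ℕ) + 1 : ℝ) := by
    refine (min_le_left _ _).trans ?_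
    push_cast
    exact Real.sqrt_le_self_iff.2 (Or.inr ((one_le_div hj).2 hjn))
  rw [pFun, div_le_div_iff₀ (by positivity) (by norm_num)]
  calc ((i : ℕ) + 1 : ℝ) * dFun n ((i : ℕ) + 1) * 100
      ≤ ((i : ℕ) + 1 : ℝ) * (n / ((i : ℕ) + 1 : ℝ)) * 100 := by gcongr
    _ = 1 * (100 * n) := by field_simp

lemma hundred_mul_le_sum_one_div_pFun {n : ℕ} (hn : 1 < n) :
    100 * (n : ℝ) ≤ ∑ i, 1 / pFun n i := by
  have h : ∀ i : Fin n, (100 : ℝ) ≤ 1 / pFun n i := fun i ↦ by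
    rw [le_one_div (by norm_num) (pFun_pos hn i)]
    exact pFun_le_one_div_hundred i
  simpa [mul_comm] using Finset.card_nsmul_le_sum Finset.univ _ _ fun i _ ↦ h i

lemma sum_one_div_pFun_sq_le (n : ℕ) :
    ∑ i, 1 / pFun n i ^ 2 ≤ (100 * n) ^ 2 * ((1 + Real.log n) / n + 2 / Real.log n ^ 2) := by
  have hH : ∑ i : Fin n, 1 / ((i : ℕ) + 1 : ℝ) ≤ 1 + Real.log n := by
    have h := harmonic_le_one_add_log n
    rw [harmonic] at h
    rw [Fin.sum_univ_eq_sum_range (fun i ↦ 1 / ((i : ℝ) + 1))]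
    simpa using h
  have hS : ∑ i : Fin n, 1 / ((i : ℕ) + 1 : ℝ) ^ 2 ≤ 2 := by
    have h := sum_Ioo_inv_sq_le (α := ℝ) 0 (n + 1)
    rw [← Finset.Ico_add_one_left_eq_Ioo, Finset.sum_Ico_eq_sum_range] at h
    rw [Fin.sum_univ_eq_sum_range (fun i ↦ 1 / ((i : ℝ) + 1) ^ 2)]
    simpa [add_comm] using h
  calc ∑ i, 1 / pFun n i ^ 2
      ≤ ∑ i : Fin n, (100 * n) ^ 2 * (1 / n * (1 / ((i : ℕ) + 1 : ℝ)) +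
          1 / Real.log n ^ 2 * (1 / ((i : ℕ) + 1 : ℝ) ^ 2)) :=
        Finset.sum_le_sum fun i _ ↦ one_div_pFun_sq_le i
    _ = (100 * n) ^ 2 * (1 / n * ∑ i : Fin n, 1 / ((i : ℕ) + 1 : ℝ) +
          1 / Real.log n ^ 2 * ∑ i : Fin n, 1 / ((i : ℕ) + 1 : ℝ) ^ 2) := by
        rw [Finset.mul_sum, Finset.mul_sum, ← Finset.sum_add_distrib, Finset.mul_sum]
    _ ≤ (100 * n) ^ 2 * (1 / n * (1 + Real.log n) + 1 / Real.log n ^ 2 * 2) := by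
        gcongr
    _ = _ := by ring

/-- There is a constant `K > 0` such that for every `n ≥ 3` and mutually
independent geometric random variables `L₁,…,L_n` on `{1,2,…}` with success
probabilities `p_i = i·d(i)/(100n)`, we have
`Pr[Σ L_i ≥ 2·Σ 1/p_i] ≤ K/(log n)²`. -/
theorem sum_geometric_tail_bound :
    ∃ K : ℝ, 0 < K ∧
      ∀ (n : ℕ), 3 ≤ n →
      ∀ {Ω : Type} [MeasurableSpace Ω] (μ : Measure Ω) [IsProbabilityMeasure μ]
        (L : Fin n → Ω → ℕ),
        (∀ i, Measurable (L i)) →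
        iIndepFun L μ →
        (∀ (i : Fin n) (k : ℕ), 1 ≤ k →
          μ {ω | L i ω = k} = ENNReal.ofReal ((1 - pFun n i) ^ (k - 1) * pFun n i)) →
        (μ {ω | 2 * ∑ i, 1 / pFun n i ≤ ∑ i, (L i ω : ℝ)}).toReal ≤
          K / (Real.log n) ^ 2 := by
  refine ⟨56, by norm_num, fun n hn Ω _ μ _ L hL hind hlaw ↦ ?_⟩
  have hn1 : 1 < n := by omega
  have hp0 := pFun_pos hn1
  have hp1 : ∀ i, pFun n i ≤ 1 := fun i ↦ (pFun_le_one_div_hundred i).trans (by norm_num)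
  have hmean := integral_sum_of_hasGeometricLaw hL hlaw hp0 hp1
  have hm := hundred_mul_le_sum_one_div_pFun hn1
  have hm0 : 0 < ∑ i, 1 / pFun n i := by
    have : (0 : ℝ) < n := by exact_mod_cast hn1.pos
    linarith
  have hvar : variance (fun ω ↦ ∑ i, (L i ω : ℝ)) μ ≤ ∑ i, 1 / pFun n i ^ 2 := by
    rw [variance_sum_of_hasGeometricLaw hL hind hlaw hp0 hp1]
    gcongr with i
    linarith [hp0 i]
  calc (μ {ω | 2 * ∑ i, 1 / pFun n i ≤ ∑ i, (L i ω : ℝ)}).toReal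
      ≤ variance (fun ω ↦ ∑ i, (L i ω : ℝ)) μ / (∑ i, 1 / pFun n i) ^ 2 := by
        simpa only [hmean] using toReal_meas_ge_two_mul_integral_le
          (memLp_sum_of_hasGeometricLaw hL hlaw hp0 hp1) (hmean ▸ hm0)
    _ ≤ (∑ i, 1 / pFun n i ^ 2) / (100 * n) ^ 2 := by gcongr
    _ ≤ (1 + Real.log n) / n + 2 / Real.log n ^ 2 := by
        rw [div_le_iff₀ (by positivity), mul_comm]
        exact sum_one_div_pFun_sq_le n
    _ ≤ 54 / Real.log n ^ 2 + 2 / Real.log n ^ 2 := by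
        grw [one_add_log_div_le (one_le_log_of_three_le hn)]
    _ = 56 / Real.log n ^ 2 := by ring
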